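/- arXiv:2512.11569 — 3 statements merged into one kernel-verified Lean document; each statement's English description precedes it below -/
import Mathlib

section
/- Let 0 ≤ χ < 1, let p be continuous on [0,1), let s be continuous on [0,1], and let f be continuous on [χ,1]. Assume that (i) p is integrable on [0, 1−ε] for every ε ∈ (0,1), (ii) the function z ↦ p(z)·(s(z)·f(χ/z) − s(1)·f(χ)) is integrable on (χ,1), and (iii) lim_{ε→0⁺} (s(1−ε)·f(χ/(1−ε)) − s(1)·f(χ)) · ∫₀^{1−ε} p(z) dz = 0. Then the weighted plus-distribution convolution ([p]₊ s ⊗ f)(χ) := lim_{ε→0⁺} ( ∫_χ^{1−ε} p(z) s(z) f(χ/z) dz − s(1−ε) f(χ/(1−ε)) ∫₀^{1−ε} p(z) dz ) exists and equals ∫_χ^1 p(z) ( s(z) f(χ/z) − s(1) f(χ) ) dz − s(1) f(χ) ∫₀^χ p(z) dz. -/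
open MeasureTheory intervalIntegral Filter Set

/-- The weighted plus-distribution convolution identity (Lemma "Convolution Identity"):
for `0 ≤ χ < 1`, `p` continuous on `[0,1)`, `s` continuous on `[0,1]`, `f` continuous
on `[χ,1]`, with the stated integrability assumptions and vanishing boundary term,
the limit defining `([p]₊ s ⊗ f)(χ)` exists and equals
`∫_χ^1 p(z)(s(z) f(χ/z) − s(1) f(χ)) dz − s(1) f(χ) ∫₀^χ p(z) dz`. -/
theorem plus_distribution_convolution_identity
    (χ : ℝ) (p s f : ℝ → ℝ)
    (hχ0 : 0 ≤ χ) (hχ1 : χ < 1)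
    (hp : ContinuousOn p (Set.Ico 0 1))
    (hs : ContinuousOn s (Set.Icc 0 1))
    (hf : ContinuousOn f (Set.Icc χ 1))
    (hpint : ∀ ε ∈ Set.Ioo (0 : ℝ) 1, IntervalIntegrable p volume 0 (1 - ε))
    (hint : IntegrableOn (fun z => p z * (s z * f (χ / z) - s 1 * f χ)) (Set.Ioo χ 1))
    (hbd : Tendsto
      (fun ε => (s (1 - ε) * f (χ / (1 - ε)) - s 1 * f χ) * ∫ z in (0 : ℝ)..(1 - ε), p z)
      (nhdsWithin 0 (Set.Ioi 0)) (nhds 0)) :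
    Tendsto
      (fun ε => (∫ z in χ..(1 - ε), p z * s z * f (χ / z))
        - s (1 - ε) * f (χ / (1 - ε)) * ∫ z in (0 : ℝ)..(1 - ε), p z)
      (nhdsWithin 0 (Set.Ioi 0))
      (nhds ((∫ z in χ..1, p z * (s z * f (χ / z) - s 1 * f χ))
        - s 1 * f χ * ∫ z in (0 : ℝ)..χ, p z)) := by
  set g : ℝ → ℝ := fun z => p z * (s z * f (χ / z) - s 1 * f χ) with hg_def
  set c : ℝ := s 1 * f χ with hc_def
  -- g is interval integrable on [χ, 1]
  have hgint : IntervalIntegrable g volume χ 1 := by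
    rw [intervalIntegrable_iff_integrableOn_Ioc_of_le (le_of_lt hχ1)]
    rwa [integrableOn_Ioc_iff_integrableOn_Ioo]
  -- the primitive of g is continuous within Icc χ 1 at 1
  have hcont : ContinuousWithinAt (fun b => ∫ z in χ..b, g z) (Set.Icc χ 1) 1 := by
    apply intervalIntegral.continuousWithinAt_primitive (measure_singleton 1)
    simpa [min_self, max_eq_right (le_of_lt hχ1)] using hgint
  -- the map ε ↦ 1 - ε tends to 1 within Icc χ 1
  have hmap : Tendsto (fun ε : ℝ => 1 - ε) (nhdsWithin 0 (Set.Ioi 0))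
      (nhdsWithin 1 (Set.Icc χ 1)) := by
    rw [tendsto_nhdsWithin_iff]
    constructor
    · have h1 : Tendsto (fun ε : ℝ => 1 - ε) (nhds 0) (nhds (1 - 0)) :=
        tendsto_const_nhds.sub tendsto_id
      simpa using h1.mono_left nhdsWithin_le_nhds
    · filter_upwards [self_mem_nhdsWithin,
        mem_nhdsWithin_of_mem_nhds (Iio_mem_nhds (by linarith : (0:ℝ) < 1 - χ))] with ε h1 h2
      exact ⟨by simp only [Set.mem_Iio] at h2; linarith, by simp only [Set.mem_Ioi] at h1; linarith⟩
  have hA : Tendsto (fun ε : ℝ => ∫ z in χ..(1 - ε), g z) (nhdsWithin 0 (Set.Ioi 0))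
      (nhds (∫ z in χ..1, g z)) := hcont.tendsto.comp hmap
  -- desired limit point
  have hlim : Tendsto
      (fun ε : ℝ => (∫ z in χ..(1 - ε), g z)
        - (s (1 - ε) * f (χ / (1 - ε)) - c) * (∫ z in (0:ℝ)..(1 - ε), p z)
        - c * ∫ z in (0:ℝ)..χ, p z)
      (nhdsWithin 0 (Set.Ioi 0))
      (nhds ((∫ z in χ..1, g z) - c * ∫ z in (0:ℝ)..χ, p z)) := by
    have := (hA.sub hbd).sub (tendsto_const_nhds (x := c * ∫ z in (0:ℝ)..χ, p z))
    simpa using this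
  -- show equality eventually
  refine hlim.congr' ?_
  filter_upwards [self_mem_nhdsWithin,
    mem_nhdsWithin_of_mem_nhds (Iio_mem_nhds (by linarith : (0:ℝ) < 1 - χ))] with ε hε1 hε2
  simp only [Set.mem_Ioi] at hε1
  simp only [Set.mem_Iio] at hε2
  set b : ℝ := 1 - ε with hb_def
  have hχb : χ < b := by simp only [hb_def]; linarith
  have hb1 : b < 1 := by simp only [hb_def]; linarith
  have hpb : IntervalIntegrable p volume 0 b := hpint ε ⟨hε1, by linarith⟩
  have hsub : Set.uIcc χ b ⊆ Set.uIcc 0 b := by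
    rw [Set.uIcc_of_le (le_of_lt hχb), Set.uIcc_of_le (by linarith : (0:ℝ) ≤ b)]
    exact Set.Icc_subset_Icc hχ0 le_rfl
  have hpχb : IntervalIntegrable p volume χ b := hpb.mono_set hsub
  have hsub0 : Set.uIcc 0 χ ⊆ Set.uIcc 0 b := by
    rw [Set.uIcc_of_le hχ0, Set.uIcc_of_le (by linarith : (0:ℝ) ≤ b)]
    exact Set.Icc_subset_Icc le_rfl (le_of_lt hχb)
  have hp0χ : IntervalIntegrable p volume 0 χ := hpb.mono_set hsub0
  have hgχb : IntervalIntegrable g volume χ b := by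
    apply hgint.mono_set
    rw [Set.uIcc_of_le (le_of_lt hχb), Set.uIcc_of_le (le_of_lt hχ1)]
    exact Set.Icc_subset_Icc le_rfl (le_of_lt hb1)
  -- split integrals
  have hsplit : (∫ z in (0:ℝ)..b, p z) = (∫ z in (0:ℝ)..χ, p z) + ∫ z in χ..b, p z :=
    (intervalIntegral.integral_add_adjacent_intervals hp0χ hpχb).symm
  have hkey : (∫ z in χ..b, p z * s z * f (χ / z))
      = (∫ z in χ..b, g z) + c * ∫ z in χ..b, p z := by
    have : ∀ z, p z * s z * f (χ / z) = g z + c * p z := by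
      intro z; simp only [hg_def]; ring
    rw [intervalIntegral.integral_congr (fun z _ => this z),
      intervalIntegral.integral_add hgχb (hpχb.const_mul c),
      intervalIntegral.integral_const_mul]
  rw [hkey, hsplit]
  ring
end

section
/- Let m₁ > 0, m₂ ≥ 0, Q > 0, x > 0 and ξ′ > 0. Set Σ₊₋ = Q² + m₂² − m₁², Δ = √(Σ₊₋² + 4m₁²Q²), χ = x(Σ₊₋ + Δ)/(2Q²), and ξ = χ/ξ′. Then the partonic invariant ŝ₁ := m₁² − m₂² − Q² + ξQ²/x − m₁² x/ξ satisfies the factorized form ŝ₁ = ((1 − ξ′)/(2ξ′)) · [ (Δ − Σ₊₋) ξ′ + Δ + Σ₊₋ ]. In particular ŝ₁ = 0 exactly when ξ′ = 1. -/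
/-- Factorized form of the partonic invariant `ŝ₁`:
`ŝ₁ = ((1 − ξ′)/(2ξ′))·[(Δ − Σ₊₋)ξ′ + Δ + Σ₊₋]`, so `ŝ₁ = 0` exactly when `ξ′ = 1`. -/
theorem s1hat_factorization (m₁ m₂ Q x ξ' : ℝ)
    (hm₁ : 0 < m₁) (hm₂ : 0 ≤ m₂) (hQ : 0 < Q) (hx : 0 < x) (hξ : 0 < ξ') :
    let Spm := Q ^ 2 + m₂ ^ 2 - m₁ ^ 2
    let Δ := Real.sqrt (Spm ^ 2 + 4 * m₁ ^ 2 * Q ^ 2)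
    let χ := x * (Spm + Δ) / (2 * Q ^ 2)
    let ξ := χ / ξ'
    let s₁ := m₁ ^ 2 - m₂ ^ 2 - Q ^ 2 + ξ * Q ^ 2 / x - m₁ ^ 2 * x / ξ
    s₁ = (1 - ξ') / (2 * ξ') * ((Δ - Spm) * ξ' + Δ + Spm)
    ∧ (s₁ = 0 ↔ ξ' = 1) := by
  intro Spm Δ χ ξ s₁
  have habs : |Spm| < Δ := by
    have h1 : Spm ^ 2 < Spm ^ 2 + 4 * m₁ ^ 2 * Q ^ 2 := by
      have : 0 < 4 * m₁ ^ 2 * Q ^ 2 := by positivity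
      linarith
    calc |Spm| = Real.sqrt (Spm ^ 2) := (Real.sqrt_sq_eq_abs Spm).symm
    _ < Δ := Real.sqrt_lt_sqrt (sq_nonneg _) h1
  have hΔsq : Δ ^ 2 = Spm ^ 2 + 4 * m₁ ^ 2 * Q ^ 2 := by
    have : 0 ≤ Spm ^ 2 + 4 * m₁ ^ 2 * Q ^ 2 := by positivity
    rw [Real.sq_sqrt this]
  have hsum : 0 < Spm + Δ := by have := abs_lt.1 habs; linarith [this.1]
  have hdiff : 0 < Δ - Spm := by have := abs_lt.1 habs; linarith [this.2]
  have hQ2 : (Q:ℝ) ^ 2 ≠ 0 := by positivity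
  have hxne : x ≠ 0 := hx.ne'
  have hξne : ξ' ≠ 0 := hξ.ne'
  have hsumne : Spm + Δ ≠ 0 := hsum.ne'
  have hS : Spm = Q ^ 2 + m₂ ^ 2 - m₁ ^ 2 := rfl
  have hξdef : ξ = x * (Spm + Δ) / (2 * Q ^ 2) / ξ' := rfl
  have hterm1 : ξ * Q ^ 2 / x = (Spm + Δ) / (2 * ξ') := by
    rw [hξdef]; field_simp
  have hterm2 : m₁ ^ 2 * x / ξ = ξ' * (Δ - Spm) / 2 := by
    have h4 : 4 * m₁ ^ 2 * Q ^ 2 = (Δ - Spm) * (Δ + Spm) := by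
      have h : (Δ - Spm) * (Δ + Spm) = Δ ^ 2 - Spm ^ 2 := by ring
      rw [h, hΔsq]; ring
    rw [hξdef]
    field_simp
    linear_combination x * x * ξ' * h4 + (x ^ 2 * ξ' - 1) * hΔsq
  have heq : s₁ = (1 - ξ') / (2 * ξ') * ((Δ - Spm) * ξ' + Δ + Spm) := by
    show m₁ ^ 2 - m₂ ^ 2 - Q ^ 2 + ξ * Q ^ 2 / x - m₁ ^ 2 * x / ξ = _
    rw [hterm1, hterm2]
    have hmm : m₁ ^ 2 - m₂ ^ 2 - Q ^ 2 = -Spm := by rw [hS]; ring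
    rw [hmm]
    field_simp
    ring
  refine ⟨heq, ?_⟩
  rw [heq]
  have hpos : 0 < (Δ - Spm) * ξ' + Δ + Spm := by nlinarith
  constructor
  · intro h
    rcases mul_eq_zero.1 h with h1 | h2
    · rcases div_eq_zero_iff.1 h1 with h | h
      · linarith
      · exact absurd h (by positivity)
    · exact absurd h2 hpos.ne'
  · intro h; rw [h]; simp
end

section
/- Work in ℝ⁴ with the Minkowski inner product ⟪u,v⟫ = u₀v₀ − u₁v₁ − u₂v₂ − u₃v₃ given by the metric η = diag(1,−1,−1,−1). Let P, q ∈ ℝ⁴, set M² = ⟪P,P⟫, Q² = −⟪q,q⟫, ν = ⟪P,q⟫, and Δ² = 4(ν² + M²Q²), and assume Q² ≠ 0, ν ≠ 0 and Δ² ≠ 0. For real numbers F₁,…,F₆ define the hadronic tensor W^{μν} = −η^{μν}F₁ + P^μP^ν F₂/ν + F₃·E^{μν}/(2ν) + q^μq^ν F₄/Q² + (P^μq^ν + q^μP^ν) F₅/(2ν) + (P^μq^ν − q^μP^ν) F₆/(2ν), where E^{μν} = Σ_{α,β} ε^{μναβ}(ηP)_α(ηq)_β and ε^{μναβ} is the totally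 antisymmetric Levi-Civita symbol with ε^{0123} = 1. Define the projector P₅^{μν} = −(4ν/Δ²)·( −(12/Δ²)·( Q²ν P^μP^ν − M²ν q^μq^ν + (Δ²/6 − Q²M²)(P^μq^ν + q^μP^ν) ) + ν η^{μν} ). Then the full contraction Σ_{μ,ν} P₅^{μν} (η W η)_{μν} = F₅, for all values of F₁,…,F₆. -/
open Finset

/-- The Minkowski inner product `⟪u,v⟫ = u₀v₀ − u₁v₁ − u₂v₂ − u₃v₃` on `ℝ⁴`. -/
noncomputable def mink (u v : Fin 4 → ℝ) : ℝ :=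
  u 0 * v 0 - u 1 * v 1 - u 2 * v 2 - u 3 * v 3

/-- The Minkowski metric `η = diag(1,−1,−1,−1)` in components. -/
noncomputable def eta : Fin 4 → Fin 4 → ℝ := fun μ ν =>
  if μ = ν then (if μ = 0 then 1 else -1) else 0

/-- Index lowering with the Minkowski metric: `(ηv)_μ = Σ_ν η_{μν} v^ν`. -/
noncomputable def lowerIdx (v : Fin 4 → ℝ) : Fin 4 → ℝ := fun μ => ∑ ν, eta μ ν * v ν

/-- The totally antisymmetric Levi-Civita symbol on `Fin 4` with `ε^{0123} = 1`,
realized as the determinant of the matrix whose rows are the corresponding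
standard basis vectors. -/
noncomputable def leviCivita (μ ν α β : Fin 4) : ℝ :=
  Matrix.det (Matrix.of
    ![(Pi.single μ 1 : Fin 4 → ℝ), Pi.single ν 1, Pi.single α 1, Pi.single β 1])

/-- The antisymmetric structure `E^{μν} = Σ_{α,β} ε^{μναβ} (ηP)_α (ηq)_β`. -/
noncomputable def Emat (P q : Fin 4 → ℝ) : Fin 4 → Fin 4 → ℝ := fun μ ν =>
  ∑ α, ∑ β, leviCivita μ ν α β * lowerIdx P α * lowerIdx q β

/-- The hadronic tensor `W^{μν}` decomposed into the six structure functions. -/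
noncomputable def Wtensor (P q : Fin 4 → ℝ) (Q2 nu F₁ F₂ F₃ F₄ F₅ F₆ : ℝ) :
    Fin 4 → Fin 4 → ℝ := fun μ ν =>
  -(eta μ ν) * F₁ + P μ * P ν * F₂ / nu + F₃ * Emat P q μ ν / (2 * nu)
    + q μ * q ν * F₄ / Q2 + (P μ * q ν + q μ * P ν) * F₅ / (2 * nu)
    + (P μ * q ν - q μ * P ν) * F₆ / (2 * nu)

/-- The hadronic tensor with both indices lowered: `(ηWη)_{μν} = η_{μα} W^{αβ} η_{βν}`. -/
noncomputable def lowered (W : Fin 4 → Fin 4 → ℝ) : Fin 4 → Fin 4 → ℝ := fun μ ν =>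
  ∑ α, ∑ β, eta μ α * W α β * eta β ν

/-- The projector `P₅^{μν}`. -/
noncomputable def proj5 (P q : Fin 4 → ℝ) (M2 Q2 nu Δ2 : ℝ) : Fin 4 → Fin 4 → ℝ :=
  fun μ ν => -(4 * nu / Δ2) * (-(12 / Δ2) * (Q2 * nu * (P μ * P ν)
      - M2 * nu * (q μ * q ν) + (Δ2 / 6 - Q2 * M2) * (P μ * q ν + q μ * P ν))
    + nu * eta μ ν)

set_option maxHeartbeats 1000000 in
lemma lowered_apply (A : Fin 4 → Fin 4 → ℝ) (μ ν : Fin 4) :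
    lowered A μ ν = eta μ μ * A μ ν * eta ν ν := by
  fin_cases μ <;> fin_cases ν <;> simp [lowered, eta, Fin.sum_univ_four]

lemma eta_symm (μ ν : Fin 4) : eta μ ν = eta ν μ := by
  unfold eta
  rcases eq_or_ne μ ν with h | h
  · subst h; rfl
  · simp [h, Ne.symm h]

lemma leviCivita_antisymm (μ ν α β : Fin 4) : leviCivita μ ν α β = -leviCivita ν μ α β := by
  unfold leviCivita
  have h : (Matrix.of ![(Pi.single ν 1 : Fin 4 → ℝ), Pi.single μ 1, Pi.single α 1,
        Pi.single β 1])
      = (Matrix.of ![(Pi.single μ 1 : Fin 4 → ℝ), Pi.single ν 1, Pi.single α 1,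
          Pi.single β 1]).submatrix (Equiv.swap 0 1) id := by
    ext i j
    fin_cases i <;> simp [Matrix.submatrix, Equiv.swap_apply_of_ne_of_ne]
  rw [h, Matrix.det_permute]
  simp

lemma Emat_antisymm (P q : Fin 4 → ℝ) (μ ν : Fin 4) : Emat P q μ ν = -Emat P q ν μ := by
  unfold Emat
  rw [← Finset.sum_neg_distrib]
  refine Finset.sum_congr rfl fun α _ => ?_
  rw [← Finset.sum_neg_distrib]
  refine Finset.sum_congr rfl fun β _ => ?_
  rw [leviCivita_antisymm]
  ring

lemma lowered_antisymm (A : Fin 4 → Fin 4 → ℝ) (hA : ∀ μ ν, A μ ν = -A ν μ) (μ ν : Fin 4) :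
    lowered A μ ν = -lowered A ν μ := by
  rw [lowered_apply, lowered_apply, hA]
  ring

lemma contract_symm_antisymm (S A : Fin 4 → Fin 4 → ℝ) (hS : ∀ μ ν, S μ ν = S ν μ)
    (hA : ∀ μ ν, A μ ν = -A ν μ) : ∑ μ, ∑ ν, S μ ν * A μ ν = 0 := by
  have h : ∑ μ, ∑ ν, S μ ν * A μ ν = -∑ μ, ∑ ν, S μ ν * A μ ν := by
    conv_lhs => rw [Finset.sum_comm]
    rw [← Finset.sum_neg_distrib]
    refine Finset.sum_congr rfl fun μ _ => ?_
    rw [← Finset.sum_neg_distrib]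
    refine Finset.sum_congr rfl fun ν _ => ?_
    rw [hS ν μ, hA ν μ]
    ring
  linarith

set_option maxHeartbeats 2000000 in
lemma contract_general (P q : Fin 4 → ℝ) (a1 a2 a3 a4 b1 b2 b3 b4 b5 : ℝ) :
    ∑ μ, ∑ ν, (a1 * (P μ * P ν) + a2 * (q μ * q ν) + a3 * (P μ * q ν + q μ * P ν)
        + a4 * eta μ ν)
      * lowered (fun α β => b1 * eta α β + b2 * (P α * P β) + b3 * (q α * q β)
        + b4 * (P α * q β) + b5 * (q α * P β)) μ ν
    = a1 * (b1 * mink P P + b2 * mink P P * mink P P + b3 * mink P q * mink P q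
        + b4 * mink P P * mink P q + b5 * mink P q * mink P P)
      + a2 * (b1 * mink q q + b2 * mink P q * mink P q + b3 * mink q q * mink q q
        + b4 * mink P q * mink q q + b5 * mink q q * mink P q)
      + a3 * (2 * b1 * mink P q + 2 * b2 * mink P P * mink P q
        + 2 * b3 * mink P q * mink q q + b4 * (mink P P * mink q q + mink P q * mink P q)
        + b5 * (mink P q * mink P q + mink q q * mink P P))
      + a4 * (4 * b1 + b2 * mink P P + b3 * mink q q + b4 * mink P q + b5 * mink P q) := by
  simp only [lowered_apply, mink, eta, Fin.sum_univ_four, Fin.reduceEq, reduceIte]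
  ring

set_option maxHeartbeats 1000000 in
/-- The projector `P₅` isolates the structure function `F₅` from the
six-structure-function decomposition of the hadronic tensor. -/
theorem projector_isolates_F5 (P q : Fin 4 → ℝ) (F₁ F₂ F₃ F₄ F₅ F₆ M2 Q2 nu Δ2 : ℝ)
    (hM2 : M2 = mink P P) (hQ2 : Q2 = -mink q q) (hnu : nu = mink P q)
    (hΔ2 : Δ2 = 4 * (nu ^ 2 + M2 * Q2))
    (hQ2ne : Q2 ≠ 0) (hnune : nu ≠ 0) (hΔne : Δ2 ≠ 0) :
    ∑ μ, ∑ ν, proj5 P q M2 Q2 nu Δ2 μ ν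
      * lowered (Wtensor P q Q2 nu F₁ F₂ F₃ F₄ F₅ F₆) μ ν = F₅ := by
  set A1 : ℝ := -(4 * nu / Δ2) * (-(12 / Δ2) * (Q2 * nu)) with hA1
  set A2 : ℝ := -(4 * nu / Δ2) * (-(12 / Δ2) * (-(M2 * nu))) with hA2
  set A3 : ℝ := -(4 * nu / Δ2) * (-(12 / Δ2) * (Δ2 / 6 - Q2 * M2)) with hA3
  set A4 : ℝ := -(4 * nu / Δ2) * nu with hA4
  set B1 : ℝ := -F₁ with hB1
  set B2 : ℝ := F₂ / nu with hB2
  set B3 : ℝ := F₄ / Q2 with hB3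
  set B4 : ℝ := F₅ / (2 * nu) + F₆ / (2 * nu) with hB4
  set B5 : ℝ := F₅ / (2 * nu) - F₆ / (2 * nu) with hB5
  have hproj : ∀ μ ν, proj5 P q M2 Q2 nu Δ2 μ ν
      = A1 * (P μ * P ν) + A2 * (q μ * q ν) + A3 * (P μ * q ν + q μ * P ν)
        + A4 * eta μ ν := by
    intro μ ν
    simp only [proj5, hA1, hA2, hA3, hA4]
    ring
  have hWfun : ∀ μ ν, Wtensor P q Q2 nu F₁ F₂ F₃ F₄ F₅ F₆ μ ν
      = (B1 * eta μ ν + B2 * (P μ * P ν) + B3 * (q μ * q ν) + B4 * (P μ * q ν)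
          + B5 * (q μ * P ν)) + F₃ * Emat P q μ ν / (2 * nu) := by
    intro μ ν
    simp only [Wtensor, hB1, hB2, hB3, hB4, hB5]
    ring
  have hsplit : ∀ μ ν, lowered (Wtensor P q Q2 nu F₁ F₂ F₃ F₄ F₅ F₆) μ ν
      = lowered (fun μ ν => B1 * eta μ ν + B2 * (P μ * P ν) + B3 * (q μ * q ν)
          + B4 * (P μ * q ν) + B5 * (q μ * P ν)) μ ν
        + lowered (fun μ ν => F₃ * Emat P q μ ν / (2 * nu)) μ ν := by
    intro μ ν
    rw [lowered_apply, lowered_apply, lowered_apply, hWfun]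
    ring
  have hproj_symm : ∀ μ ν, proj5 P q M2 Q2 nu Δ2 μ ν = proj5 P q M2 Q2 nu Δ2 ν μ := by
    intro μ ν
    simp only [proj5, eta_symm μ ν]
    ring
  have hEzero : ∑ μ, ∑ ν, proj5 P q M2 Q2 nu Δ2 μ ν
      * lowered (fun μ ν => F₃ * Emat P q μ ν / (2 * nu)) μ ν = 0 := by
    refine contract_symm_antisymm _ _ hproj_symm (lowered_antisymm _ ?_)
    intro μ ν
    rw [Emat_antisymm]
    ring
  have hmink1 : mink P P = M2 := hM2.symm
  have hmink2 : mink q q = -Q2 := by rw [hQ2]; ring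
  have hmink3 : mink P q = nu := hnu.symm
  calc ∑ μ, ∑ ν, proj5 P q M2 Q2 nu Δ2 μ ν
        * lowered (Wtensor P q Q2 nu F₁ F₂ F₃ F₄ F₅ F₆) μ ν
      = (∑ μ, ∑ ν, (A1 * (P μ * P ν) + A2 * (q μ * q ν)
            + A3 * (P μ * q ν + q μ * P ν) + A4 * eta μ ν)
          * lowered (fun μ ν => B1 * eta μ ν + B2 * (P μ * P ν) + B3 * (q μ * q ν)
              + B4 * (P μ * q ν) + B5 * (q μ * P ν)) μ ν)
        + ∑ μ, ∑ ν, proj5 P q M2 Q2 nu Δ2 μ ν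
            * lowered (fun μ ν => F₃ * Emat P q μ ν / (2 * nu)) μ ν := by
        rw [← Finset.sum_add_distrib]
        refine Finset.sum_congr rfl fun μ _ => ?_
        rw [← Finset.sum_add_distrib]
        refine Finset.sum_congr rfl fun ν _ => ?_
        rw [hsplit μ ν, ← hproj μ ν]
        ring
    _ = F₅ := by
        rw [hEzero, add_zero, contract_general, hmink1, hmink2, hmink3,
          hA1, hA2, hA3, hA4, hB1, hB2, hB3, hB4, hB5, hΔ2]
        have h4 : 4 * (nu ^ 2 + M2 * Q2) ≠ 0 := hΔ2 ▸ hΔne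
        have h5 : nu ^ 2 + M2 * Q2 ≠ 0 := fun h => h4 (by rw [h]; ring)
        field_simp
        ring
end
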